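/- arXiv:1806.03635 — 2 statements merged into one kernel-verified Lean document; each statement's English description precedes it below -/
import Mathlib

section
/- Let N be a normal subgroup of a finite group G such that G/N is abelian, and let π be an irreducible finite-dimensional complex representation of N. Then all irreducible constituents of the induced representation Ind_N^G(π) appear in it with the same multiplicity; equivalently (by Frobenius reciprocity), for any two irreducible finite-dimensional complex representations σ and τ of G such that Hom_N(π, Res_N σ) ≠ 0 and Hom_N(π, Res_N τ) ≠ 0, one has dim Hom_N(π, Res_N σ) = dim Hom_N(π, Res_N τ). -/
/-! Since `G ⧸ N` is abelian, `G` acts on `Hom_N(Res σ, Res τ)` through commuting operators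
`f ↦ τ g ∘ f ∘ σ g⁻¹`. This space is nonzero, because both restrictions contain the irreducible `π`
and `π` splits off `Res σ` by averaging over `N`. A common eigenvector `f` of the action satisfies
`τ g ∘ f = c g • f ∘ σ g`, so its kernel and image are invariant and Schur's lemma makes it an
isomorphism. Thus `Res σ ≅ Res τ`, and composing with `f` identifies `Hom_N(π, Res σ)` with
`Hom_N(π, Res τ)`. -/

noncomputable section

namespace RestrictionMult

variable {G : Type*} [Group G]

/-- The submodule of equivariant linear maps between two representations. -/
def equivariantHoms {V W : Type*} [AddCommGroup V] [Module ℂ V]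
    [AddCommGroup W] [Module ℂ W]
    (π : Representation ℂ G V) (σ : Representation ℂ G W) :
    Submodule ℂ (V →ₗ[ℂ] W) where
  carrier := {f | ∀ g v, f (π g v) = σ g (f v)}
  add_mem' := by intro f₁ f₂ h₁ h₂ g v; simp [h₁ g v, h₂ g v]
  zero_mem' := by intro g v; simp
  smul_mem' := by intro c f hf g v; simp [hf g v]

/-- Two representations are equivalent (isomorphic). -/
def IsRepEquiv {V W : Type*} [AddCommGroup V] [Module ℂ V]
    [AddCommGroup W] [Module ℂ W]
    (π : Representation ℂ G V) (σ : Representation ℂ G W) : Prop :=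
  ∃ e : V ≃ₗ[ℂ] W, ∀ g v, e (π g v) = σ g (e v)

/-- A representation is irreducible if the space is nonzero and the only invariant
submodules are `⊥` and `⊤`. -/
def IsIrreducibleRep {V : Type*} [AddCommGroup V] [Module ℂ V]
    (π : Representation ℂ G V) : Prop :=
  (∃ v : V, v ≠ 0) ∧
    ∀ U : Submodule ℂ V, (∀ g, ∀ v ∈ U, π g v ∈ U) → U = ⊥ ∨ U = ⊤

/-- The twist of a representation by a character `χ : G →* ℂˣ`. -/
def twist {V : Type*} [AddCommGroup V] [Module ℂ V]
    (π : Representation ℂ G V) (χ : G →* ℂˣ) : Representation ℂ G V where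
  toFun g := (χ g : ℂ) • π g
  map_one' := by simp
  map_mul' g h := by
    ext v
    simp only [Module.End.mul_apply, LinearMap.smul_apply, map_smul, map_mul, Units.val_mul,
      mul_smul]
    rw [smul_comm]

/-- The direct sum of two representations. -/
def dsum {V W : Type*} [AddCommGroup V] [Module ℂ V]
    [AddCommGroup W] [Module ℂ W]
    (π : Representation ℂ G V) (σ : Representation ℂ G W) :
    Representation ℂ G (V × W) where
  toFun g := (π g).prodMap (σ g)
  map_one' := by ext v <;> simp
  map_mul' g h := by ext v <;> simp [Module.End.mul_apply]

/-- The subrepresentation on an invariant submodule. -/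
def resSub {V : Type*} [AddCommGroup V] [Module ℂ V]
    (π : Representation ℂ G V) (U : Submodule ℂ V)
    (hU : ∀ g, ∀ v ∈ U, π g v ∈ U) : Representation ℂ G U where
  toFun g := (π g).restrict (fun v hv => hU g v hv)
  map_one' := by ext v; simp [LinearMap.restrict_apply]
  map_mul' g h := by ext v; simp [LinearMap.restrict_apply, Module.End.mul_apply]

/-- The conjugate `π^g` of a representation of a normal subgroup `N`,
given by `x ↦ π (g⁻¹ x g)`. -/
def conjRep {N : Subgroup G} [N.Normal] {V : Type*} [AddCommGroup V] [Module ℂ V]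
    (π : Representation ℂ N V) (g : G) : Representation ℂ N V :=
  π.comp (MulAut.conjNormal g⁻¹ : N ≃* N).toMonoidHom

/-- The space of the representation of `G` induced from a representation of a
subgroup `N`: functions `f : G → V` with `f (n * x) = π n (f x)`. -/
def indSubmodule (N : Subgroup G) {V : Type*} [AddCommGroup V] [Module ℂ V]
    (π : Representation ℂ N V) : Submodule ℂ (G → V) where
  carrier := {f | ∀ (n : N) (x : G), f (n * x) = π n (f x)}
  add_mem' := by intro f₁ f₂ h₁ h₂ n x; simp [h₁ n x, h₂ n x]
  zero_mem' := by intro n x; simp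
  smul_mem' := by intro c f hf n x; simp [hf n x]

/-- The representation of `G` induced from a representation `π` of a subgroup `N`,
acting by right translation on `indSubmodule N π`. -/
def ind (N : Subgroup G) {V : Type*} [AddCommGroup V] [Module ℂ V]
    (π : Representation ℂ N V) : Representation ℂ G (indSubmodule N π) where
  toFun g :=
    { toFun := fun f => ⟨fun x => (f : G → V) (x * g),
        fun n x => by simpa [mul_assoc] using f.2 n (x * g)⟩
      map_add' := fun f₁ f₂ => by ext x; rfl
      map_smul' := fun c f => by ext x; rfl }
  map_one' := by ext f x; simp
  map_mul' g h := by ext f x; simp [Module.End.mul_apply, mul_assoc]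

open Representation

section CommonEigenvector

variable {K W ι : Type*} [Field K] [IsAlgClosed K] [AddCommGroup W] [Module K W]
  [FiniteDimensional K W]

theorem exists_common_eigenvector_of_commute [Nontrivial W] (T : ι → Module.End K W)
    (hT : ∀ i j, Commute (T i) (T j)) : ∃ w : W, w ≠ 0 ∧ ∀ i, ∃ c : K, T i w = c • w := by
  let S : Set (Submodule K W) := {U | U ≠ ⊥ ∧ ∀ i, U ≤ U.comap (T i)}
  obtain ⟨U, ⟨hU0, hUT⟩, hUmin⟩ := wellFounded_lt.has_min S ⟨⊤, top_ne_bot, fun _ => le_top⟩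
  obtain ⟨w, hwU, hw0⟩ := U.ne_bot_iff.mp hU0
  refine ⟨w, hw0, fun i => ?_⟩
  have : Nontrivial U := Submodule.nontrivial_iff_ne_bot.mpr hU0
  obtain ⟨c, hc⟩ := Module.End.exists_eigenvalue ((T i).restrict (hUT i))
  obtain ⟨u, hu⟩ := hc.exists_hasEigenvector
  -- the `c`-eigenspace of `T i` inside `U` is stable under every `T j`, so by minimality it is `U`
  set E := U ⊓ (T i).eigenspace c
  have hE : E ∈ S := by
    refine ⟨(Submodule.ne_bot_iff _).mpr ⟨u, ⟨u.2, ?_⟩, ?_⟩, fun j v hv => ⟨hUT j hv.1, ?_⟩⟩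
    · simpa [Subtype.ext_iff, LinearMap.restrict_apply] using hu.apply_eq_smul
    · simpa using hu.2
    · have hv' := Module.End.mem_eigenspace_iff.mp hv.2
      rw [SetLike.mem_coe, Module.End.mem_eigenspace_iff, ← Module.End.mul_apply,
        (hT i j).eq, Module.End.mul_apply, hv', map_smul]
  have hEU : E = U := by
    by_contra h
    exact hUmin E hE (lt_of_le_of_ne inf_le_left h)
  exact ⟨c, Module.End.mem_eigenspace_iff.mp (hEU ▸ hwU : w ∈ E).2⟩

end CommonEigenvector

section Equivariant

variable {V W X : Type*} [AddCommGroup V] [Module ℂ V] [AddCommGroup W] [Module ℂ W]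
  [AddCommGroup X] [Module ℂ X]
  {π : Representation ℂ G V} {σ : Representation ℂ G W} {τ : Representation ℂ G X}

theorem equivariantHoms_eq_invariants_linHom (π : Representation ℂ G V)
    (σ : Representation ℂ G W) : equivariantHoms π σ = (linHom π σ).invariants := by
  ext f
  rw [mem_invariants]
  simp only [linHom_apply]
  rw [mem_linHom_invariants_iff_isIntertwining, isIntertwiningMap_iff]
  rfl

theorem comp_mem_equivariantHoms {f : V →ₗ[ℂ] W} {f' : W →ₗ[ℂ] X}
    (hf : f ∈ equivariantHoms π σ) (hf' : f' ∈ equivariantHoms σ τ) :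
    f' ∘ₗ f ∈ equivariantHoms π τ := fun g v => by
  rw [LinearMap.comp_apply, LinearMap.comp_apply, hf g v, hf' g (f v)]

theorem IsIrreducibleRep.injective (hσ : IsIrreducibleRep σ) {f : W →ₗ[ℂ] X} (hf0 : f ≠ 0)
    (hker : ∀ g, ∀ w ∈ LinearMap.ker f, σ g w ∈ LinearMap.ker f) : Function.Injective f := by
  rw [← LinearMap.ker_eq_bot]
  exact (hσ.2 _ hker).resolve_right fun h => hf0 (LinearMap.ker_eq_top.mp h)

theorem IsIrreducibleRep.surjective (hτ : IsIrreducibleRep τ) {f : W →ₗ[ℂ] X} (hf0 : f ≠ 0)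
    (hrange : ∀ g, ∀ x ∈ LinearMap.range f, τ g x ∈ LinearMap.range f) :
    Function.Surjective f := by
  rw [← LinearMap.range_eq_top]
  exact (hτ.2 _ hrange).resolve_left fun h => hf0 (LinearMap.range_eq_bot.mp h)

theorem injective_of_mem_equivariantHoms (hπ : IsIrreducibleRep π) {f : V →ₗ[ℂ] W}
    (hf : f ∈ equivariantHoms π σ) (hf0 : f ≠ 0) : Function.Injective f :=
  hπ.injective hf0 fun g v hv => by
    rw [LinearMap.mem_ker, hf g v, LinearMap.mem_ker.mp hv, map_zero]

theorem bijective_of_linHom_apply_eq_smul (hσ : IsIrreducibleRep σ) (hτ : IsIrreducibleRep τ)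
    {f : W →ₗ[ℂ] X} (hf0 : f ≠ 0) (hf : ∀ g, ∃ c : ℂ, linHom σ τ g f = c • f) :
    Function.Bijective f := by
  choose c hc using hf
  have hcomm : ∀ g w, τ g (f w) = c g • f (σ g w) := fun g w => by
    simpa using congr($(hc g) (σ g w))
  have hc0 : ∀ g, c g ≠ 0 := fun g h => hf0 <| LinearMap.ext fun w => by
    simpa [h] using congr(τ g⁻¹ $(hcomm g w))
  refine ⟨hσ.injective hf0 fun g w hw => ?_, hτ.surjective hf0 fun g x hx => ?_⟩
  · have := hcomm g w
    rw [LinearMap.mem_ker.mp hw, map_zero, eq_comm, smul_eq_zero] at this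
    exact this.resolve_left (hc0 g)
  · obtain ⟨w, rfl⟩ := hx
    exact ⟨c g • σ g w, by rw [map_smul, hcomm]⟩

theorem averageMap_linHom_comp [Fintype G] [Invertible (Fintype.card G : ℂ)]
    {a : V →ₗ[ℂ] W} (ha : a ∈ equivariantHoms π σ) (p : W →ₗ[ℂ] X) :
    averageMap (linHom σ τ) p ∘ₗ a = averageMap (linHom π τ) (p ∘ₗ a) := by
  have ha' : ∀ g v, σ g (a v) = a (π g v) := fun g v => (ha g v).symm
  ext v
  simp [GroupAlgebra.average, ha']

theorem exists_leftInverse_mem_equivariantHoms [Finite G] {a : V →ₗ[ℂ] W}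
    (ha : a ∈ equivariantHoms π σ) (ha_inj : Function.Injective a) :
    ∃ p ∈ equivariantHoms σ π, p ∘ₗ a = LinearMap.id := by
  have := Fintype.ofFinite G
  have : Invertible (Fintype.card G : ℂ) :=
    invertibleOfNonzero (Nat.cast_ne_zero.mpr Fintype.card_ne_zero)
  obtain ⟨p, hp⟩ := a.exists_leftInverse_of_injective (LinearMap.ker_eq_bot.mpr ha_inj)
  refine ⟨averageMap (linHom σ π) p, ?_, ?_⟩
  · rw [equivariantHoms_eq_invariants_linHom]
    exact averageMap_invariant _ p
  · rw [averageMap_linHom_comp ha, hp]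
    refine averageMap_id _ _ ?_
    rw [← equivariantHoms_eq_invariants_linHom]
    exact fun _ _ => rfl

theorem equivariantHoms_ne_bot_of_isIrreducibleRep [Finite G] (hπ : IsIrreducibleRep π)
    (hπσ : equivariantHoms π σ ≠ ⊥) (hπτ : equivariantHoms π τ ≠ ⊥) :
    equivariantHoms σ τ ≠ ⊥ := by
  obtain ⟨a, ha, ha0⟩ := (Submodule.ne_bot_iff _).mp hπσ
  obtain ⟨b, hb, hb0⟩ := (Submodule.ne_bot_iff _).mp hπτ
  obtain ⟨p, hp, hpa⟩ := exists_leftInverse_mem_equivariantHoms ha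
    (injective_of_mem_equivariantHoms hπ ha ha0)
  refine (Submodule.ne_bot_iff _).mpr ⟨b ∘ₗ p, comp_mem_equivariantHoms hp hb, fun h => hb0 ?_⟩
  rw [← LinearMap.comp_id b, ← hpa, ← LinearMap.comp_assoc, h, LinearMap.zero_comp]

theorem IsRepEquiv.finrank_equivariantHoms_eq (π : Representation ℂ G V) (h : IsRepEquiv σ τ) :
    Module.finrank ℂ (equivariantHoms π σ) = Module.finrank ℂ (equivariantHoms π τ) := by
  obtain ⟨e, he⟩ := h
  have he_symm : (e.symm : X →ₗ[ℂ] W) ∈ equivariantHoms τ σ := fun g x => by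
    apply e.injective
    simp [he]
  let E : (V →ₗ[ℂ] W) ≃ₗ[ℂ] V →ₗ[ℂ] X := e.congrRight
  have hmap : (equivariantHoms π σ).map (E : (V →ₗ[ℂ] W) →ₗ[ℂ] V →ₗ[ℂ] X) =
      equivariantHoms π τ := by
    rw [Submodule.map_equiv_eq_comap_symm]
    ext f
    change (e.symm : X →ₗ[ℂ] W) ∘ₗ f ∈ equivariantHoms π σ ↔ _
    refine ⟨fun hf => ?_, fun hf => comp_mem_equivariantHoms hf he_symm⟩
    simpa [← LinearMap.comp_assoc] using comp_mem_equivariantHoms hf he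
  exact (E.ofSubmodules _ _ hmap).finrank_eq

end Equivariant

theorem isRepEquiv_comp_subtype_of_equivariantHoms_ne_bot {W X : Type*}
    [AddCommGroup W] [Module ℂ W] [FiniteDimensional ℂ W]
    [AddCommGroup X] [Module ℂ X] [FiniteDimensional ℂ X]
    {σ : Representation ℂ G W} {τ : Representation ℂ G X} (N : Subgroup G) [N.Normal]
    (hab : ∀ a b : G ⧸ N, a * b = b * a) (hσ : IsIrreducibleRep σ) (hτ : IsIrreducibleRep τ)
    (h : equivariantHoms (σ.comp N.subtype) (τ.comp N.subtype) ≠ ⊥) :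
    IsRepEquiv (σ.comp N.subtype) (τ.comp N.subtype) := by
  rw [equivariantHoms_eq_invariants_linHom] at h
  have : Nontrivial (invariants ((linHom σ τ).comp N.subtype)) :=
    Submodule.nontrivial_iff_ne_bot.mpr h
  set ρ := (linHom σ τ).quotientToInvariants N
  obtain ⟨F, hF0, hF⟩ := exists_common_eigenvector_of_commute (fun a => ρ a)
    fun a b => by rw [Commute, SemiconjBy, ← map_mul, hab, map_mul]
  have hbij : Function.Bijective (F : W →ₗ[ℂ] X) := by
    refine bijective_of_linHom_apply_eq_smul hσ hτ (by simpa using hF0) fun g => ?_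
    obtain ⟨c, hc⟩ := hF g
    exact ⟨c, congr($hc)⟩
  have hFN : (F : W →ₗ[ℂ] X) ∈ equivariantHoms (σ.comp N.subtype) (τ.comp N.subtype) := by
    rw [equivariantHoms_eq_invariants_linHom]
    exact F.2
  exact ⟨.ofBijective _ hbij, hFN⟩

theorem multiplicity_in_induced_constant_general
    {G : Type*} [Group G] [Finite G] (N : Subgroup G) [N.Normal]
    (hab : ∀ a b : G ⧸ N, a * b = b * a)
    {V V₁ V₂ : Type*}
    [AddCommGroup V] [Module ℂ V]
    [AddCommGroup V₁] [Module ℂ V₁] [FiniteDimensional ℂ V₁]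
    [AddCommGroup V₂] [Module ℂ V₂] [FiniteDimensional ℂ V₂]
    (π : Representation ℂ N V) (hπ : IsIrreducibleRep π)
    (σ : Representation ℂ G V₁) (hσ : IsIrreducibleRep σ)
    (τ : Representation ℂ G V₂) (hτ : IsIrreducibleRep τ)
    (h₁ : equivariantHoms π (σ.comp N.subtype) ≠ ⊥)
    (h₂ : equivariantHoms π (τ.comp N.subtype) ≠ ⊥) :
    Module.finrank ℂ (equivariantHoms π (σ.comp N.subtype)) =
      Module.finrank ℂ (equivariantHoms π (τ.comp N.subtype)) :=
  (isRepEquiv_comp_subtype_of_equivariantHoms_ne_bot N hab hσ hτ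
    (equivariantHoms_ne_bot_of_isIrreducibleRep hπ h₁ h₂)).finrank_equivariantHoms_eq π

/-- If `N` is a normal subgroup of a finite group `G` with abelian
quotient and `π` is an irreducible complex representation of `N`, then all irreducible
constituents of `Ind_N^G π` occur with the same multiplicity; equivalently, by Frobenius
reciprocity, for irreducible representations `σ`, `τ` of `G` both containing `π` on
restriction to `N`, `dim Hom_N(π, Res σ) = dim Hom_N(π, Res τ)`. -/
theorem multiplicity_in_induced_constant
    {G : Type*} [Group G] [Finite G] (N : Subgroup G) [N.Normal]
    (hab : ∀ a b : G ⧸ N, a * b = b * a)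
    {V V₁ V₂ : Type*}
    [AddCommGroup V] [Module ℂ V] [FiniteDimensional ℂ V]
    [AddCommGroup V₁] [Module ℂ V₁] [FiniteDimensional ℂ V₁]
    [AddCommGroup V₂] [Module ℂ V₂] [FiniteDimensional ℂ V₂]
    (π : Representation ℂ N V) (hπ : IsIrreducibleRep π)
    (σ : Representation ℂ G V₁) (hσ : IsIrreducibleRep σ)
    (τ : Representation ℂ G V₂) (hτ : IsIrreducibleRep τ)
    (h₁ : equivariantHoms π (σ.comp N.subtype) ≠ ⊥)
    (h₂ : equivariantHoms π (τ.comp N.subtype) ≠ ⊥) :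
    Module.finrank ℂ (equivariantHoms π (σ.comp N.subtype)) =
      Module.finrank ℂ (equivariantHoms π (τ.comp N.subtype)) :=
  multiplicity_in_induced_constant_general N hab π hπ σ hσ τ hτ h₁ h₂

end RestrictionMult
end
end

section
/- Let G be a finite group and N a normal subgroup with G/N isomorphic to (ℤ/2ℤ) × (ℤ/2ℤ). Let ω₁ and ω₂ be two distinct nontrivial homomorphisms G → ℂˣ trivial on N, let N₁ = ker ω₁, and let ω₂₁ be the restriction of ω₂ to N₁. Suppose π₁ is an irreducible finite-dimensional complex representation of N₁ such that π₁ ⊗ ω₂₁ ≇ π₁ and π₁^g ≅ π₁ ⊗ ω₂₁ for some (equivalently, every) g ∈ G \ N₁. Then the induced representation π = Ind_{N₁}^G π₁ is an irreducible representation of G with Res_{N₁} π ≅ π₁ ⊕ (π₁ ⊗ ω₂₁) and Res_N π ≅ (Res_N π₁) ⊕ (Res_N π₁), i.e., π restricted to N is twice the irreducible representation Res_N π₁. -/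
noncomputable section

namespace RestrictionMult

variable {G : Type*} [Group G]

/-!
Evaluating at `1` and at a representative `s` of `G \ N₁` identifies `Res_{N₁} Ind π₁` with
`π₁ ⊕ π₁^{s⁻¹} ≅ π₁ ⊕ (π₁ ⊗ ω₂₁)`. The two summands are irreducible and inequivalent, so an
invariant subspace meeting neither summand is zero, and `s` exchanges the summands; hence
`Ind π₁` is irreducible.

Because `G/N` is a Klein four-group, characters trivial on `N` take values `±1` and
`N = ker ω₁ ∩ ker ω₂`, i.e. `N` is the kernel of `ω₂₁`. If `U` were a proper `N`-invariant
subspace of `π₁`, then for `h ∈ N₁` with `ω₂ h = -1` the subspaces `U` and `π₁(h) U` would be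
complementary, and the reflection in `U` along `π₁(h) U` would be an isomorphism
`π₁ ⊗ ω₂₁ ≅ π₁`.
-/

section Basic

variable {H K : Type*} [Group H] [Group K]
variable {V W : Type*} [AddCommGroup V] [Module ℂ V] [AddCommGroup W] [Module ℂ W]

theorem IsRepEquiv.refl (π : Representation ℂ H V) : IsRepEquiv π π :=
  ⟨LinearEquiv.refl ℂ V, fun _ _ => rfl⟩

theorem IsRepEquiv.symm {π : Representation ℂ H V} {σ : Representation ℂ H W}
    (h : IsRepEquiv π σ) : IsRepEquiv σ π := by
  obtain ⟨e, he⟩ := h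
  exact ⟨e.symm, fun g w => e.injective (by simp [he])⟩

theorem IsRepEquiv.trans {X : Type*} [AddCommGroup X] [Module ℂ X]
    {π : Representation ℂ H V} {σ : Representation ℂ H W} {τ : Representation ℂ H X}
    (h₁ : IsRepEquiv π σ) (h₂ : IsRepEquiv σ τ) : IsRepEquiv π τ := by
  obtain ⟨e₁, he₁⟩ := h₁
  obtain ⟨e₂, he₂⟩ := h₂
  exact ⟨e₁.trans e₂, fun g v => by simp [he₁, he₂]⟩

theorem IsRepEquiv.comp {π : Representation ℂ H V} {σ : Representation ℂ H W}
    (h : IsRepEquiv π σ) (ι : K →* H) : IsRepEquiv (π.comp ι) (σ.comp ι) := by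
  obtain ⟨e, he⟩ := h
  exact ⟨e, fun g v => he (ι g) v⟩

theorem IsRepEquiv.dsum {V' W' : Type*} [AddCommGroup V'] [Module ℂ V'] [AddCommGroup W']
    [Module ℂ W'] {π : Representation ℂ H V} {π' : Representation ℂ H V'}
    {σ : Representation ℂ H W} {σ' : Representation ℂ H W'}
    (hπ : IsRepEquiv π π') (hσ : IsRepEquiv σ σ') : IsRepEquiv (dsum π σ) (dsum π' σ') := by
  obtain ⟨e, he⟩ := hπ
  obtain ⟨f, hf⟩ := hσ
  exact ⟨e.prodCongr f, fun g p => Prod.ext (he g p.1) (hf g p.2)⟩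

theorem isRepEquiv_of_injective {π : Representation ℂ H V} {σ : Representation ℂ H W}
    (hσ : IsIrreducibleRep σ) (hV : ∃ v : V, v ≠ 0) (f : V →ₗ[ℂ] W)
    (hf : ∀ g v, f (π g v) = σ g (f v)) (hinj : Function.Injective f) : IsRepEquiv π σ := by
  have hrange : ∀ g, ∀ w ∈ LinearMap.range f, σ g w ∈ LinearMap.range f := by
    rintro g _ ⟨v, rfl⟩
    exact ⟨π g v, hf g v⟩
  rcases hσ.2 _ hrange with hbot | htop
  · obtain ⟨v, hv⟩ := hV
    exact absurd (hinj (LinearMap.range_eq_bot.mp hbot ▸ (map_zero f).symm : f v = f 0)) hv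
  · exact ⟨LinearEquiv.ofBijective f ⟨hinj, LinearMap.range_eq_top.mp htop⟩, hf⟩

theorem IsIrreducibleRep.comp_of_surjective {π : Representation ℂ H V}
    (hπ : IsIrreducibleRep π) {ι : K →* H} (hι : Function.Surjective ι) :
    IsIrreducibleRep (π.comp ι) := by
  refine ⟨hπ.1, fun U hU => hπ.2 U fun g v hv => ?_⟩
  obtain ⟨k, rfl⟩ := hι g
  exact hU k v hv

theorem twist_apply (π : Representation ℂ H V) (χ : H →* ℂˣ) (g : H) (v : V) :
    twist π χ g v = (χ g : ℂ) • π g v := rfl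

theorem twist_comp (π : Representation ℂ H V) (χ : H →* ℂˣ) (ι : K →* H) :
    (twist π χ).comp ι = twist (π.comp ι) (χ.comp ι) := rfl

theorem twist_eq_self (π : Representation ℂ H V) {χ : H →* ℂˣ}
    (hχ : ∀ g, χ g = 1) : twist π χ = π := by
  ext g v
  simp [twist_apply, hχ]

theorem dsum_apply (π : Representation ℂ H V) (σ : Representation ℂ H W) (g : H) (p : V × W) :
    dsum π σ g p = (π g p.1, σ g p.2) := rfl

theorem dsum_comp (π : Representation ℂ H V) (σ : Representation ℂ H W) (ι : K →* H) :
    (dsum π σ).comp ι = dsum (π.comp ι) (σ.comp ι) := rfl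

end Basic

section DirectSum

variable {H : Type*} [Group H]
variable {V W : Type*} [AddCommGroup V] [Module ℂ V] [AddCommGroup W] [Module ℂ W]

/-- Otherwise `P` would be the graph of an isomorphism `π ≅ σ`. -/
theorem eq_bot_of_invariant_dsum {π : Representation ℂ H V} {σ : Representation ℂ H W}
    (hπ : IsIrreducibleRep π) (hσ : IsIrreducibleRep σ) (hne : ¬ IsRepEquiv π σ)
    (P : Submodule ℂ (V × W)) (hP : ∀ g, ∀ p ∈ P, dsum π σ g p ∈ P)
    (hinl : P.comap (LinearMap.inl ℂ V W) = ⊥) (hinr : P.comap (LinearMap.inr ℂ V W) = ⊥) :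
    P = ⊥ := by
  by_contra hP0
  have hnz : ∃ p : P, p ≠ 0 := by
    obtain ⟨p, hp, hp0⟩ := P.ne_bot_iff.mp hP0
    exact ⟨⟨p, hp⟩, by simpa using hp0⟩
  have hfst : IsRepEquiv (resSub (dsum π σ) P hP) π := by
    refine isRepEquiv_of_injective hπ hnz ((LinearMap.fst ℂ V W).comp P.subtype)
      (fun _ _ => rfl) fun p q hpq => ?_
    have hmem : (p - q : V × W).2 ∈ P.comap (LinearMap.inr ℂ V W) := by
      have hpq' : ((0 : V), (p - q : V × W).2) = (p - q : V × W) :=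
        Prod.ext (sub_eq_zero.mpr hpq).symm rfl
      simpa only [Submodule.mem_comap, LinearMap.inr_apply, hpq'] using P.sub_mem p.2 q.2
    rw [hinr, Submodule.mem_bot] at hmem
    exact Subtype.ext (Prod.ext hpq (sub_eq_zero.mp hmem))
  have hsnd : IsRepEquiv (resSub (dsum π σ) P hP) σ := by
    refine isRepEquiv_of_injective hσ hnz ((LinearMap.snd ℂ V W).comp P.subtype)
      (fun _ _ => rfl) fun p q hpq => ?_
    have hmem : (p - q : V × W).1 ∈ P.comap (LinearMap.inl ℂ V W) := by
      have hpq' : ((p - q : V × W).1, (0 : W)) = (p - q : V × W) :=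
        Prod.ext rfl (sub_eq_zero.mpr hpq).symm
      simpa only [Submodule.mem_comap, LinearMap.inl_apply, hpq'] using P.sub_mem p.2 q.2
    rw [hinl, Submodule.mem_bot] at hmem
    exact Subtype.ext (Prod.ext (sub_eq_zero.mp hmem) hpq)
  exact hne (hfst.symm.trans hsnd)

theorem eq_bot_or_eq_top_of_invariant_dsum_of_swap {π σ : Representation ℂ H V}
    (hπ : IsIrreducibleRep π) (hσ : IsIrreducibleRep σ) (hne : ¬ IsRepEquiv π σ) (a : H)
    (P : Submodule ℂ (V × V)) (hP : ∀ g, ∀ p ∈ P, dsum π σ g p ∈ P)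
    (hswap : ∀ p ∈ P, (p.2, π a p.1) ∈ P) : P = ⊥ ∨ P = ⊤ := by
  set A := P.comap (LinearMap.inl ℂ V V)
  set B := P.comap (LinearMap.inr ℂ V V)
  have hBA : B ≤ A := fun w hw => by simpa [A] using hswap _ hw
  have hAB : ∀ v ∈ A, π a v ∈ B := fun v hv => by simpa [B] using hswap _ hv
  have hAinv : ∀ g, ∀ v ∈ A, π g v ∈ A := fun g v hv => by
    simpa [A, dsum_apply] using hP g _ hv
  rcases hπ.2 A hAinv with hA | hA
  · exact .inl (eq_bot_of_invariant_dsum hπ hσ hne P hP hA (le_bot_iff.mp (hA ▸ hBA)))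
  · have hB : ∀ w, ((0 : V), w) ∈ P := fun w => by
      simpa [B, ← Module.End.mul_apply, ← map_mul] using
        hAB (π a⁻¹ w) (hA ▸ Submodule.mem_top)
    refine .inr (eq_top_iff.mpr fun p _ => ?_)
    simpa using P.add_mem (show p.1 ∈ A from hA ▸ Submodule.mem_top) (hB p.2)

end DirectSum

section Induction

variable {V : Type*} [AddCommGroup V] [Module ℂ V] {K : Subgroup G} {π : Representation ℂ K V}
  {s : G}

theorem indSubmodule_apply_mul (f : indSubmodule K π) (k : K) (x : G) :
    (f : G → V) (k * x) = π k ((f : G → V) x) :=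
  f.2 k x

theorem mul_self_mem_of_not_mem (hs : s ∉ K) (hK : ∀ x, x ∉ K → x * s⁻¹ ∈ K) : s * s ∈ K := by
  by_contra h
  exact hs (by simpa using hK _ h)

open Classical in
/-- Evaluation at the coset representatives `1` and `s`; the hypotheses say `G = K ∪ K s`. -/
def indEquivProd (π : Representation ℂ K V) (hs : s ∉ K) (hK : ∀ x, x ∉ K → x * s⁻¹ ∈ K) :
    indSubmodule K π ≃ₗ[ℂ] V × V where
  toFun f := ((f : G → V) 1, (f : G → V) s)
  map_add' _ _ := rfl
  map_smul' _ _ := rfl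
  invFun p := ⟨fun x => if hx : x ∈ K then π ⟨x, hx⟩ p.1 else π ⟨x * s⁻¹, hK x hx⟩ p.2,
    fun k x => by
      dsimp only
      by_cases hx : x ∈ K
      · rw [dif_pos hx, dif_pos (K.mul_mem k.2 hx), ← Module.End.mul_apply, ← map_mul]
        rfl
      · have hkx : (k : G) * x ∉ K := fun h => hx (by simpa using K.mul_mem (K.inv_mem k.2) h)
        rw [dif_neg hx, dif_neg hkx, ← Module.End.mul_apply, ← map_mul]
        congr 2
        exact Subtype.ext (mul_assoc _ _ _)⟩
  left_inv f := by
    refine Subtype.ext (funext fun x => ?_)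
    by_cases hx : x ∈ K
    · simpa [dif_pos hx] using (indSubmodule_apply_mul f ⟨x, hx⟩ 1).symm
    · simpa [dif_neg hx] using (indSubmodule_apply_mul f ⟨x * s⁻¹, hK x hx⟩ s).symm
  right_inv p := by
    refine Prod.ext ?_ ?_
    · show (if hx : (1 : G) ∈ K then π ⟨1, hx⟩ p.1 else _) = p.1
      rw [dif_pos K.one_mem, show (⟨1, K.one_mem⟩ : K) = 1 from rfl, map_one]
      rfl
    · show (if hx : s ∈ K then _ else π ⟨s * s⁻¹, hK s hx⟩ p.2) = p.2
      rw [dif_neg hs, show (⟨s * s⁻¹, hK s hs⟩ : K) = 1 from Subtype.ext (mul_inv_cancel s),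
        map_one]
      rfl

theorem indEquivProd_ind_of_mem [K.Normal] (hs : s ∉ K) (hK : ∀ x, x ∉ K → x * s⁻¹ ∈ K) (k : K)
    (f : indSubmodule K π) :
    indEquivProd π hs hK (ind K π k f) = dsum π (conjRep π s⁻¹) k (indEquivProd π hs hK f) := by
  have hconj : s * k * s⁻¹ ∈ K := Subgroup.Normal.conj_mem ‹_› _ k.2 s
  refine Prod.ext ?_ ?_
  · show (f : G → V) (1 * k) = π k ((f : G → V) 1)
    simpa using indSubmodule_apply_mul f k 1
  · show (f : G → V) (s * k) = π (MulAut.conjNormal s⁻¹⁻¹ k) ((f : G → V) s)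
    have hsk : (MulAut.conjNormal s⁻¹⁻¹ k : K) = ⟨s * k * s⁻¹, hconj⟩ := by
      ext
      simp [MulAut.conjNormal_apply]
    rw [hsk]
    simpa using indSubmodule_apply_mul f ⟨_, hconj⟩ s

theorem indEquivProd_ind_self (hs : s ∉ K) (hK : ∀ x, x ∉ K → x * s⁻¹ ∈ K)
    (f : indSubmodule K π) :
    indEquivProd π hs hK (ind K π s f) =
      ((indEquivProd π hs hK f).2,
        π ⟨s * s, mul_self_mem_of_not_mem hs hK⟩ (indEquivProd π hs hK f).1) := by
  refine Prod.ext ?_ ?_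
  · show (f : G → V) (1 * s) = (f : G → V) s
    rw [one_mul]
  · show (f : G → V) (s * s) = π _ ((f : G → V) 1)
    simpa only [mul_one] using
      indSubmodule_apply_mul f ⟨s * s, mul_self_mem_of_not_mem hs hK⟩ 1

theorem isRepEquiv_comp_subtype_ind [K.Normal] (hs : s ∉ K) (hK : ∀ x, x ∉ K → x * s⁻¹ ∈ K) :
    IsRepEquiv ((ind K π).comp K.subtype) (dsum π (conjRep π s⁻¹)) :=
  ⟨indEquivProd π hs hK, indEquivProd_ind_of_mem hs hK⟩

theorem isIrreducibleRep_ind [K.Normal] (hπ : IsIrreducibleRep π) (hs : s ∉ K)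
    (hK : ∀ x, x ∉ K → x * s⁻¹ ∈ K) (hne : ¬ IsRepEquiv π (conjRep π s⁻¹)) :
    IsIrreducibleRep (ind K π) := by
  set Φ := indEquivProd π hs hK
  obtain ⟨v, hv⟩ := hπ.1
  refine ⟨⟨Φ.symm (v, 0), by simpa using hv⟩, fun U hU => ?_⟩
  have hconj : IsIrreducibleRep (conjRep π s⁻¹) := hπ.comp_of_surjective (MulEquiv.surjective _)
  have hdsum : ∀ k, ∀ p ∈ U.map Φ.toLinearMap,
      dsum π (conjRep π s⁻¹) k p ∈ U.map Φ.toLinearMap := by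
    rintro k _ ⟨f, hf, rfl⟩
    exact ⟨ind K π k f, hU k f hf, indEquivProd_ind_of_mem hs hK k f⟩
  have hswap : ∀ p ∈ U.map Φ.toLinearMap,
      (p.2, π ⟨s * s, mul_self_mem_of_not_mem hs hK⟩ p.1) ∈ U.map Φ.toLinearMap := by
    rintro _ ⟨f, hf, rfl⟩
    exact ⟨ind K π s f, hU s f hf, indEquivProd_ind_self hs hK f⟩
  simpa using eq_bot_or_eq_top_of_invariant_dsum_of_swap hπ hconj hne _ _ hdsum hswap

end Induction

section Twist

variable {H K : Type*} [Group H] [Group K] {V : Type*} [AddCommGroup V] [Module ℂ V]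
  {π : Representation ℂ H V} {χ : H →* ℂˣ}

/-- The witness is the reflection in `U` along `U'`. -/
theorem isRepEquiv_twist_of_isCompl (hχ : ∀ h, χ h = 1 ∨ χ h = -1) {U U' : Submodule ℂ V}
    (hUU' : IsCompl U U')
    (heven : ∀ h, χ h = 1 → (∀ v ∈ U, π h v ∈ U) ∧ ∀ v ∈ U', π h v ∈ U')
    (hodd : ∀ h, χ h = -1 → (∀ v ∈ U, π h v ∈ U') ∧ ∀ v ∈ U', π h v ∈ U) :
    IsRepEquiv (twist π χ) π := by
  set e := Submodule.prodEquivOfIsCompl U U' hUU'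
  set T := (e.symm.trans ((LinearEquiv.refl ℂ U).prodCongr (LinearEquiv.neg ℂ))).trans e
  have hT : ∀ u ∈ U, ∀ u' ∈ U', T (u + u') = u - u' := by
    intro u hu u' hu'
    have he : e.symm (u + u') = (⟨u, hu⟩, ⟨u', hu'⟩) := e.symm_apply_eq.mpr rfl
    simp [T, he, e, sub_eq_add_neg]
  refine ⟨T, fun h v => ?_⟩
  obtain ⟨u, hu, u', hu', rfl⟩ := Submodule.mem_sup.mp
    (show v ∈ U ⊔ U' from hUU'.sup_eq_top ▸ Submodule.mem_top)
  rcases hχ h with hh | hh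
  · rw [twist_apply, hh, Units.val_one, one_smul, map_add,
      hT _ ((heven h hh).1 u hu) _ ((heven h hh).2 u' hu'), hT u hu u' hu', map_sub]
  · have hsplit : twist π χ h (u + u') = -π h u' + -π h u := by
      simp [twist_apply, hh, add_comm]
    rw [hsplit, hT _ (neg_mem ((hodd h hh).2 u' hu')) _ (neg_mem ((hodd h hh).1 u hu)),
      hT u hu u' hu', map_sub]
    abel

theorem isRepEquiv_twist_of_ne_bot_of_ne_top (hπ : IsIrreducibleRep π)
    (hχ : ∀ h, χ h = 1 ∨ χ h = -1) {U U' : Submodule ℂ V} (hU₀ : U ≠ ⊥) (hU₁ : U ≠ ⊤)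
    (heven : ∀ h, χ h = 1 → (∀ v ∈ U, π h v ∈ U) ∧ ∀ v ∈ U', π h v ∈ U')
    (hodd : ∀ h, χ h = -1 → (∀ v ∈ U, π h v ∈ U') ∧ ∀ v ∈ U', π h v ∈ U) :
    IsRepEquiv (twist π χ) π := by
  have hsup : ∀ h, ∀ v ∈ U ⊔ U', π h v ∈ U ⊔ U' := by
    intro h v hv
    obtain ⟨u, hu, u', hu', rfl⟩ := Submodule.mem_sup.mp hv
    rw [map_add]
    rcases hχ h with hh | hh
    · exact add_mem (Submodule.mem_sup_left ((heven h hh).1 u hu))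
        (Submodule.mem_sup_right ((heven h hh).2 u' hu'))
    · exact add_mem (Submodule.mem_sup_right ((hodd h hh).1 u hu))
        (Submodule.mem_sup_left ((hodd h hh).2 u' hu'))
  have hinf : ∀ h, ∀ v ∈ U ⊓ U', π h v ∈ U ⊓ U' := by
    rintro h v ⟨hv, hv'⟩
    rcases hχ h with hh | hh
    · exact ⟨(heven h hh).1 v hv, (heven h hh).2 v hv'⟩
    · exact ⟨(hodd h hh).2 v hv', (hodd h hh).1 v hv⟩
  have hdisj : U ⊓ U' = ⊥ :=
    (hπ.2 _ hinf).resolve_right fun h => hU₁ (top_le_iff.mp (h ▸ inf_le_left))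
  have hcodisj : U ⊔ U' = ⊤ :=
    (hπ.2 _ hsup).resolve_left fun h => hU₀ (le_bot_iff.mp (h ▸ le_sup_left))
  exact isRepEquiv_twist_of_isCompl hχ
    ⟨disjoint_iff.mpr hdisj, codisjoint_iff.mpr hcodisj⟩ heven hodd

theorem IsIrreducibleRep.comp_of_not_isRepEquiv_twist (hπ : IsIrreducibleRep π)
    (hχ : ∀ h, χ h = 1 ∨ χ h = -1) (htw : ¬ IsRepEquiv (twist π χ) π) (ι : K →* H)
    (hι : χ.ker ≤ ι.range) : IsIrreducibleRep (π.comp ι) := by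
  refine ⟨hπ.1, fun U hU => ?_⟩
  have hUker : ∀ h, χ h = 1 → ∀ v ∈ U, π h v ∈ U := fun h hh v hv => by
    obtain ⟨k, rfl⟩ := hι hh
    exact hU k v hv
  obtain ⟨a, ha⟩ : ∃ a, χ a = -1 := by
    by_contra! hne
    rw [twist_eq_self π fun h => (hχ h).resolve_right (hne h)] at htw
    exact htw (.refl π)
  have hodd : ∀ h, χ h = -1 → ∀ v ∈ U, π h v ∈ U.map (π a) := fun h hh v hv =>
    ⟨π (a⁻¹ * h) v, hUker _ (by simp [ha, hh]) v hv, by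
      rw [← Module.End.mul_apply, ← map_mul, mul_inv_cancel_left]⟩
  have hmul : ∀ h w, π h (π a w) = π (h * a) w := fun h w => by rw [map_mul]; rfl
  have heven' : ∀ h, χ h = 1 → ∀ v ∈ U.map (π a), π h v ∈ U.map (π a) := by
    rintro h hh _ ⟨w, hw, rfl⟩
    exact hmul h w ▸ hodd _ (by simp [hh, ha]) w hw
  have hodd' : ∀ h, χ h = -1 → ∀ v ∈ U.map (π a), π h v ∈ U := by
    rintro h hh _ ⟨w, hw, rfl⟩
    exact hmul h w ▸ hUker _ (by simp [hh, ha]) w hw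
  by_contra! hU₀
  exact htw (isRepEquiv_twist_of_ne_bot_of_ne_top hπ hχ hU₀.1 hU₀.2
    (fun h hh => ⟨hUker h hh, heven' h hh⟩) fun h hh => ⟨hodd h hh, hodd' h hh⟩)

end Twist

section Characters

variable {N : Subgroup G} {ω ω₁ ω₂ : G →* ℂˣ}

theorem mul_self_mem_of_quotient_klein [N.Normal]
    (e : G ⧸ N ≃* Multiplicative (ZMod 2) × Multiplicative (ZMod 2)) (g : G) : g * g ∈ N := by
  have hsq : ∀ m : Multiplicative (ZMod 2) × Multiplicative (ZMod 2), m * m = 1 := by decide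
  rw [← QuotientGroup.eq_one_iff, QuotientGroup.mk_mul, ← e.map_eq_one_iff, map_mul]
  exact hsq _

theorem index_eq_four_of_quotient_klein [N.Normal]
    (e : G ⧸ N ≃* Multiplicative (ZMod 2) × Multiplicative (ZMod 2)) : N.index = 4 := by
  rw [Subgroup.index, Nat.card_congr e.toEquiv]
  simp

theorem eq_one_or_eq_neg_one_of_mul_self_mem (hsq : ∀ g, g * g ∈ N) (hω : N ≤ ω.ker)
    (g : G) : ω g = 1 ∨ ω g = -1 := by
  have hg : (ω g : ℂ) * ω g = 1 := by
    rw [← Units.val_mul, ← map_mul, MonoidHom.mem_ker.mp (hω (hsq g)), Units.val_one]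
  rcases mul_self_eq_one_iff.mp hg with h | h
  exacts [.inl (Units.ext h), .inr (Units.ext h)]

theorem index_ker_eq_two (hω : ∀ g, ω g = 1 ∨ ω g = -1) (hω1 : ω ≠ 1) : ω.ker.index = 2 := by
  obtain ⟨a, ha⟩ : ∃ a, ω a ≠ 1 := by
    by_contra! h
    exact hω1 (MonoidHom.ext h)
  refine Subgroup.index_eq_two_iff.mpr ⟨a, fun b => ?_⟩
  rcases hω a with ha' | ha' <;> rcases hω b with hb | hb <;> simp_all

theorem eq_of_ker_eq (hω₁ : ∀ g, ω₁ g = 1 ∨ ω₁ g = -1) (hω₂ : ∀ g, ω₂ g = 1 ∨ ω₂ g = -1)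
    (h : ω₁.ker = ω₂.ker) : ω₁ = ω₂ := by
  ext g
  have hg : ω₁ g = 1 ↔ ω₂ g = 1 := by rw [← MonoidHom.mem_ker, h, MonoidHom.mem_ker]
  rcases hω₁ g with h₁ | h₁ <;> rcases hω₂ g with h₂ | h₂ <;> simp_all

theorem ker_inf_ker_le (hN : N.index = 4) (hN₁ : N ≤ ω₁.ker) (hN₂ : N ≤ ω₂.ker)
    (hω₁ : ∀ g, ω₁ g = 1 ∨ ω₁ g = -1) (hω₂ : ∀ g, ω₂ g = 1 ∨ ω₂ g = -1) (hω₁1 : ω₁ ≠ 1)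
    (hω₂1 : ω₂ ≠ 1) (hne : ω₁ ≠ ω₂) : ω₁.ker ⊓ ω₂.ker ≤ N := by
  set L := ω₁.ker ⊓ ω₂.ker
  have hNL : N.relIndex L * L.index = 4 := hN ▸ Subgroup.relIndex_mul_index (le_inf hN₁ hN₂)
  by_contra hLN
  have hrel : N.relIndex L ≠ 1 := fun h => hLN (Subgroup.relIndex_eq_one.mp h)
  -- `[G : N] = 4` with `N < L ≤ ker ω` and `[G : ker ω] = 2` leaves no room between `L` and `ker ω`
  have hker : ∀ ω : G →* ℂˣ, ω.ker.index = 2 → L ≤ ω.ker → ω.ker ≤ L := by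
    intro ω hω hL
    have hLω : L.relIndex ω.ker * 2 = L.index := hω ▸ Subgroup.relIndex_mul_index hL
    have h2 : N.relIndex L * L.relIndex ω.ker = 2 := by
      rw [← hLω, ← mul_assoc] at hNL
      linarith
    rcases (Nat.dvd_prime Nat.prime_two).mp (Dvd.intro_left _ h2) with h | h
    · exact Subgroup.relIndex_eq_one.mp h
    · rw [h] at h2
      omega
  have h₁ := hker ω₁ (index_ker_eq_two hω₁ hω₁1) inf_le_left
  have h₂ := hker ω₂ (index_ker_eq_two hω₂ hω₂1) inf_le_right
  exact hne (eq_of_ker_eq hω₁ hω₂ (le_antisymm (h₁.trans inf_le_right) (h₂.trans inf_le_left)))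

end Characters

theorem induced_restricts_to_twice_irreducible_general
    {G : Type*} [Group G] (N : Subgroup G) [N.Normal]
    (hquot : Nonempty ((G ⧸ N) ≃* Multiplicative (ZMod 2) × Multiplicative (ZMod 2)))
    (ω₁ ω₂ : G →* ℂˣ) (hne : ω₁ ≠ ω₂) (hω₁ : ω₁ ≠ 1) (hω₂ : ω₂ ≠ 1)
    (hω₁N : ∀ n ∈ N, ω₁ n = 1) (hω₂N : ∀ n ∈ N, ω₂ n = 1)
    {V₁ : Type*} [AddCommGroup V₁] [Module ℂ V₁]
    (π₁ : Representation ℂ ω₁.ker V₁) (hπ₁ : IsIrreducibleRep π₁)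
    (htw : ¬ IsRepEquiv (twist π₁ (ω₂.comp ω₁.ker.subtype)) π₁)
    (hconj : ∀ g : G, g ∉ ω₁.ker →
      IsRepEquiv (conjRep π₁ g) (twist π₁ (ω₂.comp ω₁.ker.subtype))) :
    IsIrreducibleRep (ind ω₁.ker π₁) ∧
    IsRepEquiv ((ind ω₁.ker π₁).comp ω₁.ker.subtype)
      (dsum π₁ (twist π₁ (ω₂.comp ω₁.ker.subtype))) ∧
    IsIrreducibleRep
      (π₁.comp (Subgroup.inclusion (fun x hx => MonoidHom.mem_ker.mpr (hω₁N x hx)))) ∧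
    IsRepEquiv ((ind ω₁.ker π₁).comp N.subtype)
      (dsum (π₁.comp (Subgroup.inclusion (fun x hx => MonoidHom.mem_ker.mpr (hω₁N x hx))))
        (π₁.comp (Subgroup.inclusion (fun x hx => MonoidHom.mem_ker.mpr (hω₁N x hx))))) := by
  obtain ⟨e⟩ := hquot
  have hsq := mul_self_mem_of_quotient_klein e
  have hω₁pm := eq_one_or_eq_neg_one_of_mul_self_mem hsq hω₁N
  have hω₂pm := eq_one_or_eq_neg_one_of_mul_self_mem hsq hω₂N
  obtain ⟨s, hs⟩ : ∃ s, s ∉ ω₁.ker := by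
    by_contra! h
    exact hω₁ (MonoidHom.ext h)
  have hK : ∀ x, x ∉ ω₁.ker → x * s⁻¹ ∈ ω₁.ker := fun x hx => by
    simp [(hω₁pm x).resolve_left hx, (hω₁pm s).resolve_left hs]
  have hconj' := hconj s⁻¹ (by simpa using hs)
  have hres := (isRepEquiv_comp_subtype_ind hs hK).trans ((IsRepEquiv.refl π₁).dsum hconj')
  refine ⟨isIrreducibleRep_ind hπ₁ hs hK fun h => htw (h.trans hconj').symm, hres, ?_, ?_⟩
  · refine hπ₁.comp_of_not_isRepEquiv_twist (fun g => hω₂pm g) htw _ fun x hx => ?_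
    have hxN : (x : G) ∈ N := ker_inf_ker_le (index_eq_four_of_quotient_klein e) hω₁N hω₂N
      hω₁pm hω₂pm hω₁ hω₂ hne ⟨x.2, hx⟩
    exact ⟨⟨x, hxN⟩, rfl⟩
  · have h := hres.comp (Subgroup.inclusion fun x hx => MonoidHom.mem_ker.mpr (hω₁N x hx))
    rwa [dsum_comp, twist_comp, twist_eq_self _ fun n : N => hω₂N n n.2] at h

/-- With `N ⊴ G`, `G/N ≅ ℤ/2 × ℤ/2`, distinct nontrivial characters
`ω₁, ω₂` of `G` trivial on `N`, `N₁ = ker ω₁` and `ω₂₁ = ω₂|_{N₁}`, suppose `π₁` is an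
irreducible complex representation of `N₁` with `π₁ ⊗ ω₂₁ ≇ π₁` and
`π₁^g ≅ π₁ ⊗ ω₂₁` for every `g ∈ G \ N₁`.  Then `π = Ind_{N₁}^G π₁` is irreducible,
`Res_{N₁} π ≅ π₁ ⊕ (π₁ ⊗ ω₂₁)`, and `Res_N π ≅ (Res_N π₁) ⊕ (Res_N π₁)` with
`Res_N π₁` irreducible. -/
theorem induced_restricts_to_twice_irreducible
    {G : Type*} [Group G] [Finite G] (N : Subgroup G) [N.Normal]
    (hquot : Nonempty ((G ⧸ N) ≃* Multiplicative (ZMod 2) × Multiplicative (ZMod 2)))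
    (ω₁ ω₂ : G →* ℂˣ) (hne : ω₁ ≠ ω₂) (hω₁ : ω₁ ≠ 1) (hω₂ : ω₂ ≠ 1)
    (hω₁N : ∀ n ∈ N, ω₁ n = 1) (hω₂N : ∀ n ∈ N, ω₂ n = 1)
    {V₁ : Type*} [AddCommGroup V₁] [Module ℂ V₁] [FiniteDimensional ℂ V₁]
    (π₁ : Representation ℂ ω₁.ker V₁) (hπ₁ : IsIrreducibleRep π₁)
    (htw : ¬ IsRepEquiv (twist π₁ (ω₂.comp ω₁.ker.subtype)) π₁)
    (hconj : ∀ g : G, g ∉ ω₁.ker →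
      IsRepEquiv (conjRep π₁ g) (twist π₁ (ω₂.comp ω₁.ker.subtype))) :
    IsIrreducibleRep (ind ω₁.ker π₁) ∧
    IsRepEquiv ((ind ω₁.ker π₁).comp ω₁.ker.subtype)
      (dsum π₁ (twist π₁ (ω₂.comp ω₁.ker.subtype))) ∧
    IsIrreducibleRep
      (π₁.comp (Subgroup.inclusion (fun x hx => MonoidHom.mem_ker.mpr (hω₁N x hx)))) ∧
    IsRepEquiv ((ind ω₁.ker π₁).comp N.subtype)
      (dsum (π₁.comp (Subgroup.inclusion (fun x hx => MonoidHom.mem_ker.mpr (hω₁N x hx))))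
        (π₁.comp (Subgroup.inclusion (fun x hx => MonoidHom.mem_ker.mpr (hω₁N x hx))))) :=
  induced_restricts_to_twice_irreducible_general N hquot ω₁ ω₂ hne hω₁ hω₂ hω₁N hω₂N π₁ hπ₁ htw
    hconj

end RestrictionMult
end
end
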